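/- Let ψ_sc be the formal power series over ℂ whose (2n)-th coefficient is the n-th Catalan number for every n ≥ 1 and all of whose other coefficients vanish (the moment series Σ_{n≥1} φ(x^n) z^n of the standard semicircle distribution). Then ψ_sc∘(X·(1+X²)⁻¹) = X². In other words, χ(w) = w/(1+w²) is a √z-compositional inverse of ψ_sc, i.e., the S-transform of the standard semicircle distribution is S(z) = 1/√z. -/

import Mathlib

/-
Writing `C(z) = Σ catalan n zⁿ`, the hypotheses say `1 + ψ = C(X²)`, so Catalan's equation
`C = 1 + z C²` gives `1 + ψ = 1 + X² (1 + ψ)²`. Substituting `G = X/(1 + X²)` for `X`, both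
`1 + ψ∘G` and `1 + X²` solve `T = 1 + G² T²`; since `G` has no constant term this equation has
a unique solution in `ℂ⟦X⟧`, hence `ψ∘G = X²`.
-/

open PowerSeries

/-- Formal composition `F ∘ G` of power series over `ℂ`, intended for the case where
`G` has zero constant term (so that only finitely many terms contribute to each
coefficient). -/
noncomputable def comp (F G : PowerSeries ℂ) : PowerSeries ℂ :=
  PowerSeries.mk fun n =>
    PowerSeries.coeff (R := ℂ) n
      (∑ k ∈ Finset.range (n + 1), PowerSeries.C (R := ℂ) (PowerSeries.coeff (R := ℂ) k F) * G ^ k)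

namespace PowerSeries

theorem coeff_pow_eq_zero_of_lt {R : Type*} [Semiring R] {g : R⟦X⟧} (hg : constantCoeff g = 0)
    {n k : ℕ} (h : n < k) : coeff n (g ^ k) = 0 :=
  coeff_of_lt_order n ((Nat.cast_lt.mpr h).trans_le (le_order_pow_of_constantCoeff_eq_zero k hg))

theorem eq_of_sq_mul_add_one_eq {R : Type*} [CommRing R] {g p q : R⟦X⟧}
    (hg : constantCoeff g = 0) (hp : p ^ 2 * g + 1 = p) (hq : q ^ 2 * g + 1 = q) : p = q := by
  have hunit : IsUnit (1 - (p + q) * g) := by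
    simp [isUnit_iff_constantCoeff, hg]
  have hfactor : (p - q) * (1 - (p + q) * g) = 0 := by linear_combination hq - hp
  exact sub_eq_zero.mp (hunit.mul_left_eq_zero.mp hfactor)

end PowerSeries

theorem comp_eq_subst (F : ℂ⟦X⟧) {G : ℂ⟦X⟧} (hG : constantCoeff G = 0) :
    comp F G = F.subst G := by
  ext n
  rw [comp, coeff_mk, coeff_subst' (HasSubst.of_constantCoeff_zero' hG), map_sum,
    finsum_eq_sum_of_support_subset (s := Finset.range (n + 1))]
  · simp only [coeff_C_mul, smul_eq_mul]
  · intro d hd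
    rw [Finset.coe_range, Set.mem_Iio, Nat.lt_succ_iff]
    by_contra h
    exact hd (smul_eq_zero_of_right _ (coeff_pow_eq_zero_of_lt hG (not_le.mp h)))

theorem one_add_eq_expand_catalanSeries {ψ : ℂ⟦X⟧} (h0 : coeff 0 ψ = 0)
    (heven : ∀ n : ℕ, 1 ≤ n → coeff (2 * n) ψ = (catalan n : ℂ))
    (hodd : ∀ n : ℕ, Odd n → coeff n ψ = 0) :
    1 + ψ = expand 2 two_ne_zero (map (Nat.castRingHom ℂ) catalanSeries) := by
  ext n
  obtain ⟨m, rfl | rfl⟩ := Nat.even_or_odd' n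
  · rw [coeff_expand_mul, coeff_map, catalanSeries_coeff, map_add, coeff_one]
    cases m with
    | zero => simp [h0]
    | succ m => simp [heven (m + 1) (Nat.succ_pos m)]
  · rw [coeff_expand_of_not_dvd _ _ _ (by omega), map_add, coeff_one, if_neg (by omega),
      hodd _ (odd_two_mul_add_one m), add_zero]

/-- The S-transform of the standard semicircle distribution is `S(z) = 1/√z`: the
moment series `ψ_sc = Σ_{n≥1} catalan(n)·z^{2n}` (even moments the Catalan numbers,
odd moments zero) satisfies `ψ_sc ∘ (X·(1+X²)⁻¹) = X²`, i.e. `χ(w) = w/(1+w²)` is a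
`√z`-compositional inverse of `ψ_sc`. -/
theorem stmt_12 (ψ : PowerSeries ℂ)
    (h0 : PowerSeries.coeff (R := ℂ) 0 ψ = 0)
    (heven : ∀ n : ℕ, 1 ≤ n → PowerSeries.coeff (R := ℂ) (2 * n) ψ = (catalan n : ℂ))
    (hodd : ∀ n : ℕ, Odd n → PowerSeries.coeff (R := ℂ) n ψ = 0) :
    comp ψ (PowerSeries.X * (1 + PowerSeries.X ^ 2)⁻¹) = PowerSeries.X ^ 2 := by
  set G : ℂ⟦X⟧ := X * (1 + X ^ 2)⁻¹
  have hG : constantCoeff G = 0 := by simp [G]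
  have hGX : G * (1 + X ^ 2) = X := by
    rw [mul_assoc, PowerSeries.inv_mul_cancel _ (by simp), mul_one]
  have hsubst := HasSubst.of_constantCoeff_zero' hG
  let φ : ℕ⟦X⟧ →+* ℂ⟦X⟧ := (substAlgHom hsubst : ℂ⟦X⟧ →ₐ[ℂ] ℂ⟦X⟧).toRingHom.comp
    ((expand 2 two_ne_zero).toRingHom.comp (map (Nat.castRingHom ℂ)))
  have hφ_cat : φ catalanSeries = 1 + comp ψ G := by
    simp only [φ, RingHom.comp_apply, AlgHom.toRingHom_eq_coe, RingHom.coe_coe,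
      ← one_add_eq_expand_catalanSeries h0 heven hodd, map_add, map_one, coe_substAlgHom,
      comp_eq_subst ψ hG]
  have hφ_X : φ X = G ^ 2 := by
    simp [φ, coe_substAlgHom, subst_pow hsubst, subst_X hsubst]
  have hcomp : (1 + comp ψ G) ^ 2 * G ^ 2 + 1 = 1 + comp ψ G := by
    simpa [hφ_cat, hφ_X] using congrArg φ catalanSeries_sq_mul_X_add_one
  have hX : (1 + X ^ 2) ^ 2 * G ^ 2 + 1 = 1 + X ^ 2 := by
    linear_combination (G * (1 + X ^ 2) + X) * hGX
  exact add_left_cancel (eq_of_sq_mul_add_one_eq (by simp [hG]) hcomp hX)
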